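/- arXiv:1803.10532 — 5 statements merged into one kernel-verified Lean document; each statement's English description precedes it below -/
import Mathlib

section
/- In a Boolean inverse semigroup, for elements with u, v ≤ s appropriately (u ∨ v ≤ s, with both u,v ≤ s), one has s∖(u ∨ v) = (s∖u)·s⁻¹·(s∖v). -/
/-- An inverse semigroup: every element has a unique (generalized) inverse. -/
class InverseSemigroup (S : Type*) extends Semigroup S, Inv S where
  mul_inv_mul : ∀ s : S, s * s⁻¹ * s = s
  inv_mul_inv : ∀ s : S, s⁻¹ * s * s⁻¹ = s⁻¹
  inv_unique : ∀ s t : S, s * t * s = s → t * s * t = t → t = s⁻¹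

/-- An inverse semigroup with a zero element. -/
class InverseSemigroupWithZero (S : Type*) extends InverseSemigroup S, Zero S where
  zero_mul : ∀ s : S, 0 * s = 0
  mul_zero : ∀ s : S, s * 0 = 0

section Defs
variable {S : Type*}

/-- The natural partial order on an inverse semigroup: `a ≤ b` iff `a = b (a⁻¹ a)`. -/
def nle [InverseSemigroup S] (a b : S) : Prop := a = b * (a⁻¹ * a)

/-- Compatibility: `a⁻¹ b` and `a b⁻¹` are both idempotent. -/
def compat [InverseSemigroup S] (a b : S) : Prop :=
  IsIdempotentElem (a⁻¹ * b) ∧ IsIdempotentElem (a * b⁻¹)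

/-- Orthogonality: `a⁻¹ b = 0 = a b⁻¹`. -/
def orth [InverseSemigroupWithZero S] (a b : S) : Prop := a⁻¹ * b = 0 ∧ a * b⁻¹ = 0

/-- `u` is the least upper bound (join) of `a` and `b` in the natural partial order. -/
def isJoin [InverseSemigroup S] (u a b : S) : Prop :=
  nle a u ∧ nle b u ∧ ∀ c, nle a c → nle b c → nle u c

/-- `m` is the greatest lower bound (meet) of `a` and `b` in the natural partial order. -/
def isMeet [InverseSemigroup S] (m a b : S) : Prop :=
  nle m a ∧ nle m b ∧ ∀ c, nle c a → nle c b → nle c m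

/-- `c = a ∖ b`: `c ≤ a`, `c ⊥ b` and `a = b ∨ c`. -/
def isDiff [InverseSemigroupWithZero S] (c a b : S) : Prop :=
  nle c a ∧ orth c b ∧ isJoin a b c

end Defs

/-- A distributive inverse semigroup: compatible pairs have joins, and
multiplication distributes over such joins. -/
class DistributiveInverseSemigroup (S : Type*) extends InverseSemigroupWithZero S where
  join_exists : ∀ a b : S, compat a b → ∃ u, isJoin u a b
  mul_join_left : ∀ a b u c : S, isJoin u a b → isJoin (c * u) (c * a) (c * b)
  mul_join_right : ∀ a b u c : S, isJoin u a b → isJoin (u * c) (a * c) (b * c)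

/-- A Boolean inverse semigroup: a distributive inverse semigroup whose idempotents
form a (generalized) Boolean algebra, i.e. relative complements of idempotents exist. -/
class BooleanInverseSemigroup (S : Type*) extends DistributiveInverseSemigroup S where
  relcomp : ∀ e f : S, IsIdempotentElem e → IsIdempotentElem f → nle f e →
    ∃ c, IsIdempotentElem c ∧ isDiff c e f

/-!
An element `a ≤ s` is determined by its domain, `a = s (a⁻¹ a)`, and `a ↦ a⁻¹ a` carries joins
and relative complements to joins and relative complements of idempotents. The claim therefore
reduces to the De Morgan law `e ∖ (f ∨ g) = (e ∖ f)(e ∖ g)` for commuting idempotents, together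
with `cu s⁻¹ cv = s (cu⁻¹ cu)(cv⁻¹ cv)`.
-/

namespace InverseSemigroup

section Basic
variable {S : Type*} [InverseSemigroup S]

theorem inv_inv (s : S) : s⁻¹⁻¹ = s :=
  (inv_unique s⁻¹ s (inv_mul_inv s) (mul_inv_mul s)).symm

theorem inv_eq_self_of_isIdempotentElem {e : S} (he : IsIdempotentElem e) : e⁻¹ = e :=
  (inv_unique e e (by rw [he.eq, he.eq]) (by rw [he.eq, he.eq])).symm

theorem isIdempotentElem_inv_mul (s : S) : IsIdempotentElem (s⁻¹ * s) := by
  rw [IsIdempotentElem, ← mul_assoc, inv_mul_inv]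

theorem isIdempotentElem_mul_inv (s : S) : IsIdempotentElem (s * s⁻¹) := by
  rw [IsIdempotentElem, ← mul_assoc, mul_inv_mul]

theorem isIdempotentElem_mul {e f : S} (he : IsIdempotentElem e) (hf : IsIdempotentElem f) :
    IsIdempotentElem (e * f) := by
  -- `f (e f)⁻¹ e` is an inverse of `e f`, so it is `(e f)⁻¹`, which is then idempotent.
  have hinv : f * (e * f)⁻¹ * e = (e * f)⁻¹ := by
    refine inv_unique _ _ ?_ ?_
    · simpa only [mul_assoc, he.mul_self_mul, hf.mul_self_mul] using mul_inv_mul (e * f)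
    · have h := congrArg (f * · * e) (inv_mul_inv (e * f))
      simpa only [mul_assoc, he.mul_self_mul, hf.mul_self_mul] using h
  have hidem : IsIdempotentElem (e * f)⁻¹ :=
    calc (e * f)⁻¹ * (e * f)⁻¹ = (f * (e * f)⁻¹ * e) * (f * (e * f)⁻¹ * e) := by rw [hinv]
      _ = f * ((e * f)⁻¹ * (e * f) * (e * f)⁻¹) * e := by simp only [mul_assoc]
      _ = (e * f)⁻¹ := by rw [inv_mul_inv, hinv]
  rwa [← inv_inv (e * f), inv_eq_self_of_isIdempotentElem hidem]

theorem commute_of_isIdempotentElem {e f : S} (he : IsIdempotentElem e)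
    (hf : IsIdempotentElem f) : Commute e f := by
  have hfe : f * e = (e * f)⁻¹ := by
    refine inv_unique _ _ ?_ ?_
    · simpa only [mul_assoc, he.mul_self_mul, hf.mul_self_mul] using (isIdempotentElem_mul he hf).eq
    · simpa only [mul_assoc, he.mul_self_mul, hf.mul_self_mul] using (isIdempotentElem_mul hf he).eq
  rw [Commute, SemiconjBy, hfe, inv_eq_self_of_isIdempotentElem (isIdempotentElem_mul he hf)]

theorem mul_inv_rev (a b : S) : (a * b)⁻¹ = b⁻¹ * a⁻¹ := by
  have hc := commute_of_isIdempotentElem (isIdempotentElem_mul_inv b) (isIdempotentElem_inv_mul a)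
  refine (inv_unique _ _ ?_ ?_).symm
  · calc a * b * (b⁻¹ * a⁻¹) * (a * b) = a * ((b * b⁻¹) * (a⁻¹ * a)) * b := by
          simp only [mul_assoc]
      _ = (a * a⁻¹ * a) * (b * b⁻¹ * b) := by rw [hc.eq]; simp only [mul_assoc]
      _ = a * b := by rw [mul_inv_mul, mul_inv_mul]
  · calc b⁻¹ * a⁻¹ * (a * b) * (b⁻¹ * a⁻¹) = b⁻¹ * ((a⁻¹ * a) * (b * b⁻¹)) * a⁻¹ := by
          simp only [mul_assoc]
      _ = (b⁻¹ * b * b⁻¹) * (a⁻¹ * a * a⁻¹) := by rw [← hc.eq]; simp only [mul_assoc]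
      _ = b⁻¹ * a⁻¹ := by rw [inv_mul_inv, inv_mul_inv]

theorem nle_refl (a : S) : nle a a := by
  rw [nle, ← mul_assoc, mul_inv_mul]

theorem nle_antisymm {a b : S} (hab : nle a b) (hba : nle b a) : a = b := by
  have hc := commute_of_isIdempotentElem (isIdempotentElem_inv_mul b) (isIdempotentElem_inv_mul a)
  calc a = a * (b⁻¹ * b) * (a⁻¹ * a) := by rw [← hba]; exact hab
    _ = a * (a⁻¹ * a) * (b⁻¹ * b) := by rw [mul_assoc, hc.eq, ← mul_assoc]
    _ = b := by rw [← mul_assoc a a⁻¹ a, mul_inv_mul, ← hba]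

theorem eq_mul_of_nle {e f : S} (he : IsIdempotentElem e) (h : nle e f) : e = f * e := by
  rwa [nle, inv_eq_self_of_isIdempotentElem he, he.eq] at h

theorem inv_mul_of_nle {a b : S} (h : nle a b) : b⁻¹ * a = a⁻¹ * a := by
  have he := isIdempotentElem_inv_mul a
  have ha_inv : a⁻¹ = a⁻¹ * a * b⁻¹ := by
    conv_lhs => rw [h, mul_inv_rev, inv_eq_self_of_isIdempotentElem he]
  have hc := commute_of_isIdempotentElem he (isIdempotentElem_inv_mul b)
  calc b⁻¹ * a = b⁻¹ * b * (a⁻¹ * a) := by rw [mul_assoc, ← h]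
    _ = a⁻¹ * a * (b⁻¹ * b) * (a⁻¹ * a) := by rw [hc.eq, he.mul_mul_self]
    _ = (a⁻¹ * a * b⁻¹) * (b * (a⁻¹ * a)) := by simp only [mul_assoc]
    _ = a⁻¹ * a := by rw [← ha_inv, ← h]

end Basic

section WithZero
variable {S : Type*} [InverseSemigroupWithZero S]

theorem zero_inv : (0 : S)⁻¹ = 0 :=
  inv_eq_self_of_isIdempotentElem (InverseSemigroupWithZero.mul_zero 0)

theorem zero_nle (a : S) : nle 0 a := by
  rw [nle, zero_inv, InverseSemigroupWithZero.mul_zero, InverseSemigroupWithZero.mul_zero]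

theorem inv_mul_mul_inv_mul_eq_zero_of_orth {a b : S} (h : orth a b) :
    a⁻¹ * a * (b⁻¹ * b) = 0 := by
  rw [← mul_assoc, mul_assoc a⁻¹, h.2, InverseSemigroupWithZero.mul_zero,
    InverseSemigroupWithZero.zero_mul]

end WithZero

section Distributive
variable {S : Type*} [DistributiveInverseSemigroup S]

theorem isJoin_inv_mul {w u v : S} (h : isJoin w u v) :
    isJoin (w⁻¹ * w) (u⁻¹ * u) (v⁻¹ * v) := by
  have h' := DistributiveInverseSemigroup.mul_join_left u v w w⁻¹ h
  rwa [inv_mul_of_nle h.1, inv_mul_of_nle h.2.1] at h'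

theorem eq_of_isJoin_zero_left {z b : S} (h : isJoin z 0 b) : z = b :=
  nle_antisymm (h.2.2 b (zero_nle b) (nle_refl b)) h.2.1

theorem mul_eq_self_of_isJoin {g e c x : S} (h : isJoin g e c) (hex : e * x = 0)
    (hgx : g * x = x) : c * x = x := by
  have h' := DistributiveInverseSemigroup.mul_join_right e c g x h
  rw [hex, hgx] at h'
  exact (eq_of_isJoin_zero_left h').symm

theorem mul_eq_zero_of_isJoin {g e f x : S} (h : isJoin g e f) (hex : e * x = 0)
    (hfx : f * x = 0) : g * x = 0 := by
  have h' := DistributiveInverseSemigroup.mul_join_right e f g x h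
  rw [hex, hfx] at h'
  exact eq_of_isJoin_zero_left h'

theorem isDiff_inv_mul {c a b : S} (h : isDiff c a b) :
    isDiff (c⁻¹ * c) (a⁻¹ * a) (b⁻¹ * b) := by
  have hjoin := isJoin_inv_mul h.2.2
  have hzero := inv_mul_mul_inv_mul_eq_zero_of_orth h.2.1
  rw [isDiff, orth, inv_eq_self_of_isIdempotentElem (isIdempotentElem_inv_mul c),
    inv_eq_self_of_isIdempotentElem (isIdempotentElem_inv_mul b)]
  exact ⟨hjoin.2.1, ⟨hzero, hzero⟩, hjoin⟩

theorem isDiff_join_eq_mul {g eu ev ew cu cv cw : S}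
    (heu : IsIdempotentElem eu) (hev : IsIdempotentElem ev) (hew : IsIdempotentElem ew)
    (hcu : IsIdempotentElem cu) (hcv : IsIdempotentElem cv) (hcw : IsIdempotentElem cw)
    (hw : isJoin ew eu ev) (hu : isDiff cu g eu) (hv : isDiff cv g ev) (hwd : isDiff cw g ew) :
    cw = cu * cv := by
  have hcomm {x y : S} (hx : IsIdempotentElem x) (hy : IsIdempotentElem y) : x * y = y * x :=
    (commute_of_isIdempotentElem hx hy).eq
  have hdisj {c e : S} (hc : IsIdempotentElem c) (he : IsIdempotentElem e) (hd : isDiff c g e) :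
      e * c = 0 := by
    rw [← hcomm hc he, ← inv_eq_self_of_isIdempotentElem he]
    exact hd.2.1.2
  have hcw_le {e c : S} (he : IsIdempotentElem e) (hle : nle e ew) (hd : isDiff c g e) :
      c * cw = cw := by
    refine mul_eq_self_of_isJoin hd.2.2 ?_ (eq_mul_of_nle hcw hwd.1).symm
    rw [eq_mul_of_nle he hle, hcomm hew he, mul_assoc, hdisj hcw hew hwd,
      InverseSemigroupWithZero.mul_zero]
  have hmul_le : cw * (cu * cv) = cu * cv := by
    refine mul_eq_self_of_isJoin hwd.2.2 (mul_eq_zero_of_isJoin hw ?_ ?_) ?_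
    · rw [← mul_assoc, hdisj hcu heu hu, InverseSemigroupWithZero.zero_mul]
    · rw [← mul_assoc, hcomm hev hcu, mul_assoc, hdisj hcv hev hv,
        InverseSemigroupWithZero.mul_zero]
    · rw [← mul_assoc, ← eq_mul_of_nle hcu hu.1]
  calc cw = cu * cv * cw := by rw [mul_assoc, hcw_le hev hw.2.1 hv, hcw_le heu hw.1 hu]
    _ = cw * (cu * cv) := hcomm (isIdempotentElem_mul hcu hcv) hcw
    _ = cu * cv := hmul_le

end Distributive

end InverseSemigroup

theorem stmt7_general {S : Type*} [BooleanInverseSemigroup S] (s u v w cu cv cw : S)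
    (hw : isJoin w u v)
    (hcu : isDiff cu s u) (hcv : isDiff cv s v) (hcw : isDiff cw s w) :
    cw = cu * s⁻¹ * cv := by
  open InverseSemigroup in
  have hdom : cw⁻¹ * cw = cu⁻¹ * cu * (cv⁻¹ * cv) :=
    isDiff_join_eq_mul (isIdempotentElem_inv_mul u) (isIdempotentElem_inv_mul v)
      (isIdempotentElem_inv_mul w) (isIdempotentElem_inv_mul cu) (isIdempotentElem_inv_mul cv)
      (isIdempotentElem_inv_mul cw) (isJoin_inv_mul hw) (isDiff_inv_mul hcu)
      (isDiff_inv_mul hcv) (isDiff_inv_mul hcw)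
  calc cw = s * (cw⁻¹ * cw) := hcw.1
    _ = s * (cu⁻¹ * cu) * (cv⁻¹ * cv) := by rw [hdom, ← mul_assoc]
    _ = cu * s⁻¹ * cv := by rw [← hcu.1, mul_assoc, InverseSemigroup.inv_mul_of_nle hcv.1]

/-- In a Boolean inverse semigroup, `s ∖ (u ∨ v) = (s ∖ u) s⁻¹ (s ∖ v)` for `u, v ≤ s`. -/
theorem stmt7 {S : Type*} [BooleanInverseSemigroup S] (s u v w cu cv cw : S)
    (hus : nle u s) (hvs : nle v s) (hw : isJoin w u v)
    (hcu : isDiff cu s u) (hcv : isDiff cv s v) (hcw : isDiff cw s w) :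
    cw = cu * s⁻¹ * cv :=
  stmt7_general s u v w cu cv cw hw hcu hcv hcw
end

section
/- Let D be a distributive lattice with bottom and let e, f, i, j ∈ D with f < e and j < i. Then every prime filter containing e and omitting f also contains i and omits j, if and only if e = f ∨ (e ∧ i) and f ∧ j = e ∧ j. -/
/-- A prime filter in a lattice with bottom: a nonempty, proper (does not contain ⊥),
upward-closed, meet-closed subset `P` such that `a ⊔ b ∈ P` implies `a ∈ P` or `b ∈ P`. -/
def IsPrimeFilter {D : Type*} [Lattice D] [OrderBot D] (P : Set D) : Prop :=
  P.Nonempty ∧ (⊥ : D) ∉ P ∧ (∀ a ∈ P, ∀ b : D, a ≤ b → b ∈ P) ∧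
    (∀ a ∈ P, ∀ b ∈ P, a ⊓ b ∈ P) ∧ ∀ a b : D, a ⊔ b ∈ P → a ∈ P ∨ b ∈ P

/-!
Both conditions amount to the inequalities `e ≤ f ⊔ (e ⊓ i)` and `e ⊓ j ≤ f`, the reverse
inequalities being automatic from `f ≤ e`. By the prime ideal theorem, `a ≤ b` holds iff every
prime filter containing `a` contains `b`; read filter by filter, the two inequalities say that a
prime filter containing `e` but not `f` must contain `i` and must not contain `j`.
-/

open Order

namespace IsPrimeFilter

variable {D : Type*} [Lattice D] [OrderBot D] {P : Set D} {a b : D}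

theorem mem_of_le (hP : IsPrimeFilter P) (ha : a ∈ P) (hab : a ≤ b) : b ∈ P :=
  hP.2.2.1 a ha b hab

theorem inf_mem (hP : IsPrimeFilter P) (ha : a ∈ P) (hb : b ∈ P) : a ⊓ b ∈ P :=
  hP.2.2.2.1 a ha b hb

theorem inf_mem_iff (hP : IsPrimeFilter P) : a ⊓ b ∈ P ↔ a ∈ P ∧ b ∈ P :=
  ⟨fun h ↦ ⟨hP.mem_of_le h inf_le_left, hP.mem_of_le h inf_le_right⟩,
    fun h ↦ hP.inf_mem h.1 h.2⟩

theorem mem_or_mem (hP : IsPrimeFilter P) (h : a ⊔ b ∈ P) : a ∈ P ∨ b ∈ P :=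
  hP.2.2.2.2 a b h

end IsPrimeFilter

theorem Order.Ideal.IsPrime.isPrimeFilter_compl {D : Type*} [Lattice D] [OrderBot D]
    {J : Ideal D} (hJ : J.IsPrime) : IsPrimeFilter (J : Set D)ᶜ :=
  ⟨Set.nonempty_compl.mpr hJ.ne_univ, fun h ↦ h J.bot_mem,
    fun _ ha _ hab hb ↦ ha (J.lower hab hb),
    fun _ ha _ hb hab ↦ (hJ.mem_or_mem hab).elim ha hb,
    fun _ _ hab ↦ or_iff_not_and_not.mpr fun h ↦
      hab (J.sup_mem (not_not.mp h.1) (not_not.mp h.2))⟩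

theorem exists_isPrimeFilter_of_not_le {D : Type*} [DistribLattice D] [OrderBot D] {a b : D}
    (h : ¬ a ≤ b) : ∃ P : Set D, IsPrimeFilter P ∧ a ∈ P ∧ b ∉ P := by
  have hdisj : Disjoint (PFilter.principal a : Set D) (Ideal.principal b : Set D) :=
    Set.disjoint_left.mpr fun _ hax hxb ↦ h (le_trans hax hxb)
  obtain ⟨J, hJ, hbJ, hJa⟩ := DistribLattice.prime_ideal_of_disjoint_filter_ideal hdisj
  exact ⟨_, hJ.isPrimeFilter_compl, Set.disjoint_left.mp hJa (PFilter.mem_principal.mpr le_rfl),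
    not_not.mpr (hbJ Ideal.mem_principal_self)⟩

theorem le_iff_forall_isPrimeFilter {D : Type*} [DistribLattice D] [OrderBot D] {a b : D} :
    a ≤ b ↔ ∀ P : Set D, IsPrimeFilter P → a ∈ P → b ∈ P := by
  refine ⟨fun hab P hP ha ↦ hP.mem_of_le ha hab, fun h ↦ by_contra fun hab ↦ ?_⟩
  obtain ⟨P, hP, ha, hb⟩ := exists_isPrimeFilter_of_not_le hab
  exact hb (h P hP ha)

theorem stmt9_general {D : Type*} [DistribLattice D] [OrderBot D] (e f i j : D)
    (hfe : f < e) :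
    (∀ P : Set D, IsPrimeFilter P → e ∈ P → f ∉ P → i ∈ P ∧ j ∉ P) ↔
      (e = f ⊔ (e ⊓ i) ∧ f ⊓ j = e ⊓ j) := by
  constructor
  · intro H
    have he : e ≤ f ⊔ (e ⊓ i) := le_iff_forall_isPrimeFilter.mpr fun P hP heP ↦ by
      by_cases hfP : f ∈ P
      · exact hP.mem_of_le hfP le_sup_left
      · exact hP.mem_of_le (hP.inf_mem heP (H P hP heP hfP).1) le_sup_right
    have hj : e ⊓ j ≤ f := le_iff_forall_isPrimeFilter.mpr fun P hP hejP ↦ by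
      obtain ⟨heP, hjP⟩ := hP.inf_mem_iff.mp hejP
      by_contra hfP
      exact (H P hP heP hfP).2 hjP
    exact ⟨he.antisymm (sup_le hfe.le inf_le_left),
      (inf_le_inf_right j hfe.le).antisymm (le_inf hj inf_le_right)⟩
  · rintro ⟨he, hj⟩ P hP heP hfP
    have heiP : e ⊓ i ∈ P := (hP.mem_or_mem (he ▸ heP)).resolve_left hfP
    have hiP : i ∈ P := hP.mem_of_le heiP inf_le_right
    refine ⟨hiP, fun hjP ↦ hfP ?_⟩
    have hejP : e ⊓ j ∈ P := hP.inf_mem heP hjP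
    exact hP.mem_of_le (hj ▸ hejP) inf_le_left

/-- In a distributive lattice with bottom, for `f < e` and `j < i`: every prime filter
containing `e` and omitting `f` contains `i` and omits `j`, iff
`e = f ⊔ (e ⊓ i)` and `f ⊓ j = e ⊓ j`. -/
theorem stmt9 {D : Type*} [DistribLattice D] [OrderBot D] (e f i j : D)
    (hfe : f < e) (hji : j < i) :
    (∀ P : Set D, IsPrimeFilter P → e ∈ P → f ∉ P → i ∈ P ∧ j ∉ P) ↔
      (e = f ⊔ (e ⊓ i) ∧ f ⊓ j = e ⊓ j) :=
  stmt9_general e f i j hfe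
end

section
/- Let R be a unital ring and S ⊆ R an inverse submonoid of the multiplicative monoid of R containing 0, satisfying: if a, b ∈ S are orthogonal (a⁻¹b = ab⁻¹ = 0) then a+b ∈ S, and if e ∈ S is idempotent then 1−e ∈ S. Then for orthogonal a, b ∈ S, the join a ∨ b in the natural partial order of S exists and equals a + b. -/
/-!
Write `a ≤ c` for `a = c e` with `e ∈ S` idempotent. Since `b b' b = b` and the idempotents
`a' a`, `b' b` commute, `b (a' a) = b (a' a)(b' b) = b a' (a b') b = 0`; hence
`a = (a + b)(a' a)` and symmetrically `b = (a + b)(b' b)`, so `a + b` is an upper bound.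
If `a = c e`, then `a' a` is absorbed by `e`, so `c (a' a) = c e (a' a) = a`; thus for a common
upper bound `c` of `a` and `b` we get `a + b = c (a' a + b' b)`, where `a' a + b' b` is an
idempotent of `S` as a sum of orthogonal idempotents.
-/

section Monoid

variable {M : Type*} [Monoid M] {a a' c e : M}

theorem isIdempotentElem_mul_of_mul_mul_eq_self (h : a * a' * a = a) :
    IsIdempotentElem (a' * a) := by
  rw [IsIdempotentElem, mul_assoc, ← mul_assoc a, h]

theorem mul_mul_eq_of_eq_mul_of_isIdempotentElem (ha : a * a' * a = a)
    (he : IsIdempotentElem e) (hae : a = c * e) (hcomm : Commute e (a' * a)) :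
    c * (a' * a) = a := by
  have habsorb : a' * a * e = a' * a := by
    rw [hae, mul_assoc, he.mul_mul_self]
  calc c * (a' * a) = c * e * (a' * a) := by rw [mul_assoc, hcomm.eq, habsorb]
    _ = a := by rw [← hae, ← mul_assoc, ha]

end Monoid

theorem mul_mul_eq_zero_of_commute {M : Type*} [MonoidWithZero M] {a a' b b' : M}
    (hb : b * b' * b = b) (hab : a * b' = 0) (hcomm : Commute (a' * a) (b' * b)) :
    b * (a' * a) = 0 := by
  calc b * (a' * a) = b * ((b' * b) * (a' * a)) := by
        conv_lhs => rw [← hb]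
        simp only [mul_assoc]
    _ = b * a' * (a * b') * b := by rw [← hcomm.eq]; simp only [mul_assoc]
    _ = 0 := by rw [hab, mul_zero, zero_mul]

theorem stmt13_general {R : Type*} [Ring R] (S : Set R)
    (hmul : ∀ a ∈ S, ∀ b ∈ S, a * b ∈ S)
    (hcomm : ∀ e ∈ S, ∀ f ∈ S, e * e = e → f * f = f → e * f = f * e)
    (hadd : ∀ a ∈ S, ∀ b ∈ S, ∀ a' ∈ S, ∀ b' ∈ S,
      a * a' * a = a → a' * a * a' = a' → b * b' * b = b → b' * b * b' = b' →
      a' * b = 0 → a * b' = 0 → a + b ∈ S)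
    (a b a' b' : R) (haS : a ∈ S) (hbS : b ∈ S) (ha'S : a' ∈ S) (hb'S : b' ∈ S)
    (ha' : a * a' * a = a ∧ a' * a * a' = a')
    (hb' : b * b' * b = b ∧ b' * b * b' = b')
    (horth : a' * b = 0 ∧ a * b' = 0) :
    a + b ∈ S ∧
    (∃ e ∈ S, e * e = e ∧ a = (a + b) * e) ∧
    (∃ e ∈ S, e * e = e ∧ b = (a + b) * e) ∧
    ∀ c ∈ S, (∃ e ∈ S, e * e = e ∧ a = c * e) → (∃ e ∈ S, e * e = e ∧ b = c * e) →
      (∃ e ∈ S, e * e = e ∧ a + b = c * e) := by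
  obtain ⟨ha1, ha2⟩ := ha'
  obtain ⟨hb1, hb2⟩ := hb'
  obtain ⟨hab', ha'b⟩ := horth
  have eaS : a' * a ∈ S := hmul a' ha'S a haS
  have ebS : b' * b ∈ S := hmul b' hb'S b hbS
  have ea := isIdempotentElem_mul_of_mul_mul_eq_self ha1
  have eb := isIdempotentElem_mul_of_mul_mul_eq_self hb1
  have hcommab : Commute (a' * a) (b' * b) := hcomm _ eaS _ ebS ea eb
  have hbea : b * (a' * a) = 0 := mul_mul_eq_zero_of_commute hb1 ha'b hcommab
  have haeb : a * (b' * b) = 0 := by rw [← mul_assoc, ha'b, zero_mul]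
  have heaeb : a' * a * (b' * b) = 0 := by rw [mul_assoc, haeb, mul_zero]
  refine ⟨hadd a haS b hbS a' ha'S b' hb'S ha1 ha2 hb1 hb2 hab' ha'b,
    ⟨a' * a, eaS, ea, ?_⟩, ⟨b' * b, ebS, eb, ?_⟩, ?_⟩
  · rw [add_mul, hbea, add_zero, ← mul_assoc, ha1]
  · rw [add_mul, haeb, zero_add, ← mul_assoc, hb1]
  · rintro c - ⟨e, heS, he, hae⟩ ⟨f, hfS, hf, hbf⟩
    have ea3 : a' * a * (a' * a) * (a' * a) = a' * a := by rw [ea.eq, ea.eq]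
    have eb3 : b' * b * (b' * b) * (b' * b) = b' * b := by rw [eb.eq, eb.eq]
    refine ⟨a' * a + b' * b, hadd _ eaS _ ebS _ eaS _ ebS ea3 ea3 eb3 eb3 heaeb heaeb,
      ea.add eb (by rw [← hcommab.eq, heaeb, add_zero]), ?_⟩
    rw [mul_add,
      mul_mul_eq_of_eq_mul_of_isIdempotentElem ha1 he hae (hcomm _ heS _ eaS he ea),
      mul_mul_eq_of_eq_mul_of_isIdempotentElem hb1 hf hbf (hcomm _ hfS _ ebS hf eb)]

/-- Let `S` be an inverse submonoid with zero of the multiplicative monoid of a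
unital ring `R`, closed under sums of orthogonal pairs and under `e ↦ 1 - e` for
idempotents. For orthogonal `a, b ∈ S` (with inverses `a', b'` in `S`, and
`a' b = a b' = 0`), the join `a ∨ b` in the natural partial order of `S`
(`x ≤ y` iff `x = y e` for some idempotent `e ∈ S`) exists and equals `a + b`. -/
theorem stmt13 {R : Type*} [Ring R] (S : Set R)
    (h0 : (0 : R) ∈ S) (h1 : (1 : R) ∈ S)
    (hmul : ∀ a ∈ S, ∀ b ∈ S, a * b ∈ S)
    (hreg : ∀ a ∈ S, ∃ b ∈ S, a * b * a = a ∧ b * a * b = b)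
    (hcomm : ∀ e ∈ S, ∀ f ∈ S, e * e = e → f * f = f → e * f = f * e)
    (hadd : ∀ a ∈ S, ∀ b ∈ S, ∀ a' ∈ S, ∀ b' ∈ S,
      a * a' * a = a → a' * a * a' = a' → b * b' * b = b → b' * b * b' = b' →
      a' * b = 0 → a * b' = 0 → a + b ∈ S)
    (hcompl : ∀ e ∈ S, e * e = e → 1 - e ∈ S)
    (a b a' b' : R) (haS : a ∈ S) (hbS : b ∈ S) (ha'S : a' ∈ S) (hb'S : b' ∈ S)
    (ha' : a * a' * a = a ∧ a' * a * a' = a')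
    (hb' : b * b' * b = b ∧ b' * b * b' = b')
    (horth : a' * b = 0 ∧ a * b' = 0) :
    a + b ∈ S ∧
    (∃ e ∈ S, e * e = e ∧ a = (a + b) * e) ∧
    (∃ e ∈ S, e * e = e ∧ b = (a + b) * e) ∧
    ∀ c ∈ S, (∃ e ∈ S, e * e = e ∧ a = c * e) → (∃ e ∈ S, e * e = e ∧ b = c * e) →
      (∃ e ∈ S, e * e = e ∧ a + b = c * e) :=
  stmt13_general S hmul hcomm hadd a b a' b' haS hbS ha'S hb'S ha' hb' horth
end

section
/- Let A be a finite alphabet with at least 2 letters. A finitely generated right ideal R = PA* of A* (P a finite prefix code) is essential (meets every nonempty right ideal) if and only if its complement A* ∖ R is finite. -/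
/-!
If `R = P A*` is essential, every word `x ∉ R` has an extension in `R`, i.e. some `p ∈ P` is
comparable with `x` in the prefix order; as `x ∉ R`, `x` must be a prefix of `p`, and a finite
`P` has only finitely many prefixes. Conversely, if `Rᶜ` is finite, then padding any word with
a letter beyond the maximal length of a word of `Rᶜ` lands in `R`.
-/

namespace List

variable {α : Type*}

def IsRightIdeal (S : Set (List α)) : Prop :=
  ∀ x ∈ S, ∀ w : List α, x ++ w ∈ S

def IsEssential (R : Set (List α)) : Prop :=
  ∀ S : Set (List α), S.Nonempty → IsRightIdeal S → (R ∩ S).Nonempty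

theorem isRightIdeal_setOf_prefix (x : List α) : IsRightIdeal {y | x <+: y} :=
  fun _ hy w => hy.trans (prefix_append _ w)

theorem finite_setOf_prefix (p : List α) : {y | y <+: p}.Finite :=
  (finite_toSet p.inits).subset fun y hy => (mem_inits y p).2 hy

theorem IsEssential.compl_subset_biUnion_prefix {P : Set (List α)}
    (h : IsEssential {x | ∃ p ∈ P, p <+: x}) :
    {x | ∃ p ∈ P, p <+: x}ᶜ ⊆ ⋃ p ∈ P, {y | y <+: p} := by
  intro x hx
  obtain ⟨z, ⟨p, hpP, hpz⟩, hxz⟩ :=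
    h {y | x <+: y} ⟨x, prefix_refl x⟩ (isRightIdeal_setOf_prefix x)
  rcases prefix_or_prefix_of_prefix hpz hxz with hpx | hxp
  · exact absurd ⟨p, hpP, hpx⟩ hx
  · exact Set.mem_biUnion hpP hxp

theorem isEssential_of_finite_compl [Nonempty α] {R : Set (List α)} (hR : Rᶜ.Finite) :
    IsEssential R := by
  rintro S ⟨x, hx⟩ hS
  obtain ⟨N, hN⟩ := (hR.image length).bddAbove
  let a : α := Classical.arbitrary α
  refine ⟨x ++ replicate (N + 1) a, ?_, hS x hx _⟩
  by_contra hc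
  have hle : (x ++ replicate (N + 1) a).length ≤ N := hN ⟨_, hc, rfl⟩
  simp only [length_append, length_replicate] at hle
  omega

end List

theorem stmt16_general {A : Type*} [Fintype A] (hA : 2 ≤ Fintype.card A)
    (P : Finset (List A))
    (R : Set (List A)) (hR : R = {x : List A | ∃ p ∈ P, p <+: x}) :
    (∀ R' : Set (List A), R'.Nonempty → (∀ x ∈ R', ∀ w : List A, x ++ w ∈ R') →
      (R ∩ R').Nonempty) ↔ Rᶜ.Finite := by
  have : Nonempty A := Fintype.card_pos_iff.mp (by omega)
  subst hR
  refine ⟨fun hess => ?_, fun hfin => List.isEssential_of_finite_compl hfin⟩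
  exact (P.finite_toSet.biUnion fun p _ => List.finite_setOf_prefix p).subset
    (List.IsEssential.compl_subset_biUnion_prefix hess)

/-- Over a finite alphabet with at least 2 letters, a finitely generated right
ideal `R = P A*` of the free monoid (`P` a finite prefix code) is essential
(meets every nonempty right ideal) iff its complement is finite. -/
theorem stmt16 {A : Type*} [Fintype A] (hA : 2 ≤ Fintype.card A)
    (P : Finset (List A))
    (hP : ∀ p ∈ P, ∀ q ∈ P, p ≠ q → ¬ p <+: q)
    (R : Set (List A)) (hR : R = {x : List A | ∃ p ∈ P, p <+: x}) :
    (∀ R' : Set (List A), R'.Nonempty → (∀ x ∈ R', ∀ w : List A, x ++ w ∈ R') →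
      (R ∩ R').Nonempty) ↔ Rᶜ.Finite :=
  stmt16_general hA P R hR
end

section
/- Let A be a finite alphabet. The Boolean subalgebra of the power set of A* generated by the finitely generated right ideals of A* is exactly the collection of definite languages, i.e., languages of the form X ∪ YA* where X and Y are finite subsets of A*. -/
/-- The Boolean subalgebra of the power set of `A*` generated by the finitely
generated right ideals: the smallest collection containing them, closed under
complements, finite unions and finite intersections. -/
inductive GenBool {A : Type*} : Set (List A) → Prop
  | ideal (Y : Finset (List A)) : GenBool {x : List A | ∃ y ∈ Y, y <+: x}
  | compl {L : Set (List A)} : GenBool L → GenBool Lᶜ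
  | union {L M : Set (List A)} : GenBool L → GenBool M → GenBool (L ∪ M)
  | inter {L M : Set (List A)} : GenBool L → GenBool M → GenBool (L ∩ M)

/-!
Call `L` `n`-definite if membership of a word of length at least `n` depends only on its
prefix of length `n`. A generator `YA*` is `n`-definite once `n` bounds the lengths of the words
of `Y`, and `n`-definiteness survives Boolean operations after enlarging `n`. An `n`-definite
language is `X ∪ YA*`, where `X` collects its words shorter than `n` and `Y` its words of
length exactly `n`. Conversely, over a finite alphabet every singleton `{x} = xA* \ ⋃ₐ xaA*`
lies in the algebra, hence so does every `X ∪ YA*`.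
-/

section

variable {A : Type*}

def rightIdeal (Y : Finset (List A)) : Set (List A) :=
  {x | ∃ y ∈ Y, y <+: x}

def IsDefinite (n : ℕ) (L : Set (List A)) : Prop :=
  ∀ x : List A, n ≤ x.length → (x ∈ L ↔ x.take n ∈ L)

namespace IsDefinite

variable {n m : ℕ} {L M : Set (List A)}

theorem mono (h : IsDefinite n L) (hnm : n ≤ m) : IsDefinite m L := by
  intro x hx
  have hn : n ≤ (x.take m).length := by rw [List.length_take]; omega
  rw [h x (hnm.trans hx), h _ hn, List.take_take, min_eq_left hnm]

theorem compl (h : IsDefinite n L) : IsDefinite n Lᶜ :=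
  fun x hx => not_congr (h x hx)

theorem union (hL : IsDefinite n L) (hM : IsDefinite m M) : IsDefinite (max n m) (L ∪ M) :=
  fun x hx => or_congr (hL.mono (le_max_left n m) x hx) (hM.mono (le_max_right n m) x hx)

theorem inter (hL : IsDefinite n L) (hM : IsDefinite m M) : IsDefinite (max n m) (L ∩ M) :=
  fun x hx => and_congr (hL.mono (le_max_left n m) x hx) (hM.mono (le_max_right n m) x hx)

end IsDefinite

theorem isDefinite_rightIdeal (Y : Finset (List A)) :
    IsDefinite (Y.sup List.length) (rightIdeal Y) := by
  intro x _
  simp only [rightIdeal, Set.mem_ofPred_eq, List.prefix_take_iff]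
  exact exists_congr fun y => and_congr_right fun hy => (and_iff_left (Finset.le_sup hy)).symm

theorem GenBool.exists_isDefinite {L : Set (List A)} (h : GenBool L) : ∃ n, IsDefinite n L := by
  induction h with
  | ideal Y => exact ⟨_, isDefinite_rightIdeal Y⟩
  | compl _ ih =>
    obtain ⟨n, hn⟩ := ih
    exact ⟨n, hn.compl⟩
  | union _ _ ihL ihM =>
    obtain ⟨n, hn⟩ := ihL
    obtain ⟨m, hm⟩ := ihM
    exact ⟨_, hn.union hm⟩
  | inter _ _ ihL ihM =>
    obtain ⟨n, hn⟩ := ihL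
    obtain ⟨m, hm⟩ := ihM
    exact ⟨_, hn.inter hm⟩

theorem exists_prefix_length_eq_iff {S : Set (List A)} {n : ℕ} {x : List A} :
    (∃ y ∈ S, y.length = n ∧ y <+: x) ↔ n ≤ x.length ∧ x.take n ∈ S := by
  constructor
  · rintro ⟨y, hyS, rfl, hyx⟩
    rw [List.prefix_iff_eq_take] at hyx
    exact ⟨hyx ▸ List.length_take_le' _ _, hyx ▸ hyS⟩
  · rintro ⟨hn, hxS⟩
    exact ⟨x.take n, hxS, List.length_take_of_le hn, List.take_prefix n x⟩

theorem IsDefinite.exists_eq_union_rightIdeal [Fintype A] {n : ℕ} {L : Set (List A)}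
    (h : IsDefinite n L) :
    ∃ X Y : Finset (List A), L = (↑X : Set (List A)) ∪ rightIdeal Y := by
  have hX : (L ∩ {w | w.length < n}).Finite :=
    (List.finite_length_lt A n).subset Set.inter_subset_right
  have hY : (L ∩ {w | w.length = n}).Finite :=
    (List.finite_length_eq A n).subset Set.inter_subset_right
  refine ⟨hX.toFinset, hY.toFinset, Set.ext fun x => ?_⟩
  simp only [rightIdeal, Set.mem_union, Set.mem_ofPred_eq, Set.Finite.coe_toFinset,
    Set.Finite.mem_toFinset, Set.mem_inter_iff, and_assoc, exists_prefix_length_eq_iff]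
  rcases lt_or_ge x.length n with hx | hx
  · simp [hx, hx.not_ge]
  · simp [hx, hx.not_gt, h x hx]

theorem GenBool.singleton [Fintype A] (x : List A) : GenBool ({x} : Set (List A)) := by
  classical
  convert (GenBool.ideal {x}).inter (GenBool.ideal (Finset.univ.image (x ++ [·]))).compl
  ext w
  simp only [Set.mem_singleton_iff, Set.mem_inter_iff, Set.mem_compl_iff, Set.mem_ofPred_eq,
    Finset.mem_singleton, Finset.mem_image, Finset.mem_univ, true_and, exists_eq_left]
  constructor
  · rintro rfl
    refine ⟨List.prefix_refl w, ?_⟩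
    rintro ⟨_, ⟨a, rfl⟩, hz⟩
    simpa using hz.length_le
  · rintro ⟨⟨t, rfl⟩, hne⟩
    cases t with
    | nil => simp
    | cons a t => exact absurd ⟨_, ⟨a, rfl⟩, ⟨t, by simp⟩⟩ hne

theorem GenBool.finset [Fintype A] (X : Finset (List A)) : GenBool (↑X : Set (List A)) := by
  classical
  induction X using Finset.induction with
  | empty => simpa [rightIdeal] using GenBool.ideal (∅ : Finset (List A))
  | insert a s _ ih =>
    rw [Finset.coe_insert, Set.insert_eq]
    exact (GenBool.singleton a).union ih

end

/-- For a finite alphabet `A`, the Boolean subalgebra of the power set of `A*`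
generated by the finitely generated right ideals is exactly the collection of
(reverse) definite languages `X ∪ Y A*` with `X, Y` finite. -/
theorem stmt17 {A : Type*} [Fintype A] (L : Set (List A)) :
    GenBool L ↔ ∃ X Y : Finset (List A),
      L = (↑X : Set (List A)) ∪ {x : List A | ∃ y ∈ Y, y <+: x} := by
  constructor
  · intro h
    obtain ⟨n, hn⟩ := h.exists_isDefinite
    exact hn.exists_eq_union_rightIdeal
  · rintro ⟨X, Y, rfl⟩
    exact (GenBool.finset X).union (GenBool.ideal Y)
end
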